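/- arXiv:math/0012240 — 3 statements merged into one kernel-verified Lean document; each statement's English description precedes it below -/
import Mathlib

section
/- Let F be a field. The Milnor K-ring K^M_*(F) is graded anti-commutative: for every x ∈ K^M_m(F) and y ∈ K^M_n(F), one has x·y = (−1)^{mn} y·x in K^M_{m+n}(F). -/
noncomputable section

/-- The Steinberg relation on the tensor algebra of `Additive Fˣ`:
`ℓ(a)·ℓ(b) = 0` whenever `a + b = 1` in `F`. -/
inductive MilnorRel (F : Type) [Field F] :
    TensorAlgebra ℤ (Additive Fˣ) → TensorAlgebra ℤ (Additive Fˣ) → Prop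
  | steinberg (a b : Fˣ) (h : (a : F) + (b : F) = 1) :
      MilnorRel F (TensorAlgebra.ι ℤ (Additive.ofMul a) *
        TensorAlgebra.ι ℤ (Additive.ofMul b)) 0

/-- The Milnor K-ring `K^M_*(F)`: the quotient of the tensor algebra of the
`ℤ`-module `F^×` by the two-sided ideal generated by the Steinberg relations. -/
abbrev MilnorK (F : Type) [Field F] := RingQuot (MilnorRel F)

/-- The generator `ℓ(a) ∈ K^M_1(F) ⊆ K^M_*(F)` attached to `a ∈ F^×`. -/
def MilnorL (F : Type) [Field F] (a : Fˣ) : MilnorK F :=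
  RingQuot.mkRingHom (MilnorRel F) (TensorAlgebra.ι ℤ (Additive.ofMul a))

/-- The degree-`n` graded piece `K^M_n(F)`: the additive subgroup generated by
`n`-fold products `ℓ(a₁)⋯ℓ(aₙ)`. -/
def MilnorDeg (F : Type) [Field F] (n : ℕ) : AddSubgroup (MilnorK F) :=
  AddSubgroup.closure
    {x | ∃ a : Fin n → Fˣ, x = (List.ofFn fun i => MilnorL F (a i)).prod}

/-! Since `-a = (1 - a) / (1 - a⁻¹)`, two Steinberg relations give `ℓ(a)ℓ(-a) = 0`; expanding
`ℓ(ab)ℓ(-ab) = 0` with `ℓ(-ab) = ℓ(-a) + ℓ(b) = ℓ(a) + ℓ(-b)` then shows that the generators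
anticommute. Moving the `m` factors of `ℓ(a₁)⋯ℓ(aₘ)` past the `n` factors of `ℓ(b₁)⋯ℓ(bₙ)` costs
the sign `(-1)^{mn}`, and both sides of the identity are biadditive, so it passes to the
subgroups generated by such products. -/

section AnticommutingProducts

variable {R : Type*} [Ring R]

theorem mul_list_prod_of_anticomm {a : R} {L : List R} (h : ∀ b ∈ L, a * b = -(b * a)) :
    a * L.prod = ((-1 : ℤ) ^ L.length) • (L.prod * a) := by
  induction L with
  | nil => simp
  | cons b t ih =>
    rw [List.forall_mem_cons] at h
    rw [List.prod_cons, List.length_cons, ← mul_assoc, h.1, neg_mul, mul_assoc, ih h.2,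
      mul_smul_comm, pow_succ, mul_neg_one, neg_smul, ← mul_assoc]

theorem list_prod_mul_list_prod_of_anticomm {L M : List R}
    (h : ∀ a ∈ L, ∀ b ∈ M, a * b = -(b * a)) :
    L.prod * M.prod = ((-1 : ℤ) ^ (L.length * M.length)) • (M.prod * L.prod) := by
  induction L with
  | nil => simp
  | cons a t ih =>
    rw [List.forall_mem_cons] at h
    rw [List.prod_cons, List.length_cons, mul_assoc, ih h.2, mul_smul_comm, ← mul_assoc,
      mul_list_prod_of_anticomm h.1, smul_mul_assoc, smul_smul, mul_assoc, ← pow_add,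
      add_one_mul, add_comm]

theorem mul_eq_zsmul_mul_of_mem_closure (c : ℤ) {S T : Set R}
    (h : ∀ x ∈ S, ∀ y ∈ T, x * y = c • (y * x)) {x y : R}
    (hx : x ∈ AddSubgroup.closure S) (hy : y ∈ AddSubgroup.closure T) :
    x * y = c • (y * x) := by
  have hxT : ∀ y ∈ T, x * y = c • (y * x) := fun y hy =>
    AddMonoidHom.eqOn_closure (f := AddMonoidHom.mulRight y) (g := c • AddMonoidHom.mulLeft y)
      (fun x hx => h x hx y hy) hx
  exact AddMonoidHom.eqOn_closure (f := AddMonoidHom.mulLeft x)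
    (g := c • AddMonoidHom.mulRight x) hxT hy

end AnticommutingProducts

section MilnorSymbols

variable {F : Type} [Field F]

theorem MilnorL_mul (a b : Fˣ) : MilnorL F (a * b) = MilnorL F a + MilnorL F b := by
  simp [MilnorL, ofMul_mul]

theorem MilnorL_div (a b : Fˣ) : MilnorL F (a / b) = MilnorL F a - MilnorL F b := by
  simp [MilnorL, ofMul_div]

theorem MilnorL_inv (a : Fˣ) : MilnorL F a⁻¹ = -MilnorL F a := by
  simp [MilnorL, ofMul_inv]

theorem MilnorL_one : MilnorL F 1 = 0 := by
  simp [MilnorL]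

theorem MilnorL_mul_MilnorL_of_add_eq_one {a b : Fˣ} (h : (a : F) + b = 1) :
    MilnorL F a * MilnorL F b = 0 := by
  simpa [MilnorL] using RingQuot.mkRingHom_rel (MilnorRel.steinberg a b h)

theorem MilnorL_mul_MilnorL_neg_self (a : Fˣ) : MilnorL F a * MilnorL F (-a) = 0 := by
  rcases eq_or_ne a 1 with rfl | ha
  · rw [MilnorL_one, zero_mul]
  have ha' : (a : F) ≠ 1 := by rwa [Ne, Units.val_eq_one]
  have hu : 1 - (a : F) ≠ 0 := sub_ne_zero.mpr ha'.symm
  have hv : 1 - (a : F)⁻¹ ≠ 0 := sub_ne_zero.mpr (inv_ne_one.mpr ha').symm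
  set u := Units.mk0 _ hu
  set v := Units.mk0 _ hv
  have hneg : -a = u / v := by
    ext
    rw [Units.val_neg, Units.val_div_eq_div_val, Units.val_mk0, Units.val_mk0, eq_div_iff hv]
    field_simp
    ring
  have hu' : MilnorL F a * MilnorL F u = 0 := MilnorL_mul_MilnorL_of_add_eq_one (by simp [u])
  have hv' : MilnorL F a * MilnorL F v = 0 := by
    have h : MilnorL F a⁻¹ * MilnorL F v = 0 := MilnorL_mul_MilnorL_of_add_eq_one (by simp [v])
    rw [MilnorL_inv] at h
    -- `rw [neg_mul]` does not fire here: the `Neg` instance of `MilnorK F` is not reducibly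
    -- that of its `Ring` structure.
    exact neg_eq_zero.mp ((neg_mul (MilnorL F a) (MilnorL F v)).symm.trans h)
  rw [hneg, MilnorL_div, mul_sub, hu', hv', sub_zero]

theorem MilnorL_anticomm (a b : Fˣ) :
    MilnorL F a * MilnorL F b = -(MilnorL F b * MilnorL F a) := by
  have hab : MilnorL F (-a) + MilnorL F b = MilnorL F (-(a * b)) := by
    rw [← MilnorL_mul, neg_mul]
  have hba : MilnorL F a + MilnorL F (-b) = MilnorL F (-(a * b)) := by
    rw [← MilnorL_mul, mul_neg]
  refine eq_neg_of_add_eq_zero_left ?_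
  calc MilnorL F a * MilnorL F b + MilnorL F b * MilnorL F a
      = MilnorL F a * (MilnorL F (-a) + MilnorL F b)
        + MilnorL F b * (MilnorL F a + MilnorL F (-b)) := by
        rw [mul_add, mul_add, MilnorL_mul_MilnorL_neg_self, MilnorL_mul_MilnorL_neg_self,
          zero_add, add_zero]
    _ = MilnorL F (a * b) * MilnorL F (-(a * b)) := by
        rw [hab, hba, MilnorL_mul, add_mul]
    _ = 0 := MilnorL_mul_MilnorL_neg_self _

end MilnorSymbols

/-- The Milnor K-ring is graded anti-commutative: for `x ∈ K^M_m(F)` and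
`y ∈ K^M_n(F)`, one has `x·y = (−1)^{mn}·(y·x)`. -/
theorem stmt_3 (F : Type) [Field F] (m n : ℕ) (x y : MilnorK F)
    (hx : x ∈ MilnorDeg F m) (hy : y ∈ MilnorDeg F n) :
    x * y = ((-1 : ℤ) ^ (m * n)) • (y * x) := by
  refine mul_eq_zsmul_mul_of_mem_closure _ ?_ hx hy
  rintro _ ⟨a, rfl⟩ _ ⟨b, rfl⟩
  have h := list_prod_mul_list_prod_of_anticomm (L := List.ofFn fun i => MilnorL F (a i))
    (M := List.ofFn fun i => MilnorL F (b i)) ?_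
  · simpa only [List.length_ofFn] using h
  · intro _ hu _ hv
    obtain ⟨i, rfl⟩ := List.mem_ofFn.mp hu
    obtain ⟨j, rfl⟩ := List.mem_ofFn.mp hv
    exact MilnorL_anticomm _ _
end
end

section
/- Let F be a field and n ≥ 2. If a₁, …, aₙ ∈ F^× satisfy a₁ + ⋯ + aₙ = 1 or a₁ + ⋯ + aₙ = 0, then ℓ(a₁)·ℓ(a₂)⋯ℓ(aₙ) = 0 in K^M_n(F). (Relation R₅ of Proposition 1.0.) -/
noncomputable section

/-! Replacing `a₁, a₂` by `s = a₁ + a₂` (when it is nonzero) keeps the sum, and the Steinberg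
relation for `a₁/s + a₂/s = 1` together with anticommutativity of `ℓ(a)ℓ(b)` writes `ℓ(a₁)ℓ(a₂)`
as a multiple of `ℓ(s)`. So the product is a multiple of a shorter product of the same kind, down
to `ℓ(a)ℓ(b)` with `a + b = 1` (Steinberg) or `a + b = 0` (from `ℓ(a)ℓ(-a) = 0`). -/

structure IsSteinbergLog {F R : Type*} [Field F] [Ring R] (ℓ : Fˣ → R) : Prop where
  map_mul : ∀ a b, ℓ (a * b) = ℓ a + ℓ b
  mul_eq_zero_of_add_eq_one : ∀ {a b : Fˣ}, (a : F) + b = 1 → ℓ a * ℓ b = 0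

namespace IsSteinbergLog

variable {F R : Type*} [Field F] [Ring R] {ℓ : Fˣ → R}

theorem map_one (hℓ : IsSteinbergLog ℓ) : ℓ 1 = 0 := by
  simpa using hℓ.map_mul 1 1

theorem map_inv (hℓ : IsSteinbergLog ℓ) (a : Fˣ) : ℓ a⁻¹ = -ℓ a := by
  rw [eq_neg_iff_add_eq_zero, ← hℓ.map_mul, inv_mul_cancel, hℓ.map_one]

theorem map_neg (hℓ : IsSteinbergLog ℓ) (a : Fˣ) : ℓ (-a) = ℓ (-1) + ℓ a := by
  rw [← hℓ.map_mul, neg_one_mul]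

/-- Since `-a = (1 - a) / (1 - a⁻¹)`, this follows from the Steinberg relations for `a`, `a⁻¹`. -/
theorem mul_neg_self (hℓ : IsSteinbergLog ℓ) (a : Fˣ) : ℓ a * ℓ (-a) = 0 := by
  rcases eq_or_ne a 1 with rfl | ha
  · rw [hℓ.map_one, zero_mul]
  have ha' : (a : F) ≠ 1 := by rwa [Ne, ← Units.val_one, Units.val_inj]
  have hu : 1 - (a : F) ≠ 0 := sub_ne_zero.mpr ha'.symm
  have hv : 1 - (a : F)⁻¹ ≠ 0 := sub_ne_zero.mpr (by simpa [eq_comm] using ha')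
  have hneg : -a = Units.mk0 _ hu * (Units.mk0 _ hv)⁻¹ := by
    ext
    simp only [Units.val_neg, Units.val_mul, Units.val_inv_eq_inv_val, Units.val_mk0]
    field_simp
    ring
  have hau : ℓ a * ℓ (Units.mk0 _ hu) = 0 := hℓ.mul_eq_zero_of_add_eq_one (by simp)
  have hav : ℓ a⁻¹ * ℓ (Units.mk0 _ hv) = 0 := hℓ.mul_eq_zero_of_add_eq_one (by simp)
  rw [hℓ.map_inv, neg_mul, neg_eq_zero] at hav
  rw [hneg, hℓ.map_mul, hℓ.map_inv, mul_add, hau, mul_neg, hav, neg_zero, add_zero]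

theorem mul_eq_zero_of_add_eq_zero (hℓ : IsSteinbergLog ℓ) {a b : Fˣ} (h : (a : F) + b = 0) :
    ℓ a * ℓ b = 0 := by
  obtain rfl : b = -a := Units.ext (eq_neg_of_add_eq_zero_right h)
  exact hℓ.mul_neg_self a

theorem mul_add_mul_swap (hℓ : IsSteinbergLog ℓ) (a b : Fˣ) : ℓ a * ℓ b + ℓ b * ℓ a = 0 := by
  have hab := hℓ.mul_neg_self (a * b)
  have ha := hℓ.mul_neg_self a
  have hb := hℓ.mul_neg_self b
  rw [hℓ.map_neg] at ha hb hab
  rw [hℓ.map_mul] at hab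
  calc ℓ a * ℓ b + ℓ b * ℓ a
      = (ℓ a + ℓ b) * (ℓ (-1) + (ℓ a + ℓ b)) - ℓ a * (ℓ (-1) + ℓ a)
        - ℓ b * (ℓ (-1) + ℓ b) := by noncomm_ring
    _ = 0 := by rw [hab, ha, hb, sub_zero, sub_zero]

theorem mul_eq_mul_of_add_eq (hℓ : IsSteinbergLog ℓ) {a b s : Fˣ} (h : (a : F) + b = s) :
    ℓ a * ℓ b = (ℓ a - ℓ b - ℓ s) * ℓ s := by
  have hst : (ℓ a - ℓ s) * (ℓ b - ℓ s) = 0 := by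
    rw [sub_eq_add_neg, sub_eq_add_neg, ← hℓ.map_inv, ← hℓ.map_mul, ← hℓ.map_mul]
    apply hℓ.mul_eq_zero_of_add_eq_one
    rw [Units.val_mul, Units.val_mul, ← add_mul, h, Units.mul_inv]
  calc ℓ a * ℓ b
      = (ℓ a - ℓ s) * (ℓ b - ℓ s) + ℓ a * ℓ s + ℓ s * ℓ b - ℓ s * ℓ s := by noncomm_ring
    _ = (ℓ a - ℓ b - ℓ s) * ℓ s := by
      rw [hst, eq_neg_of_add_eq_zero_left (hℓ.mul_add_mul_swap s b)]
      noncomm_ring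

theorem prod_map_eq_zero_of_sum_cons_cons (hℓ : IsSteinbergLog ℓ) (a b : Fˣ) (t : List Fˣ)
    (h : ((a :: b :: t).map (↑)).sum = (1 : F) ∨ ((a :: b :: t).map (↑)).sum = (0 : F)) :
    ((a :: b :: t).map ℓ).prod = 0 := by
  induction t generalizing a b with
  | nil =>
    simp only [List.map_cons, List.map_nil, List.sum_cons, List.sum_nil, add_zero,
      List.prod_cons, List.prod_nil, mul_one] at h ⊢
    exact h.elim hℓ.mul_eq_zero_of_add_eq_one hℓ.mul_eq_zero_of_add_eq_zero
  | cons c t ih =>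
    rw [List.map_cons, List.map_cons, List.prod_cons, List.prod_cons, ← mul_assoc]
    rcases eq_or_ne ((a : F) + b) 0 with hab | hab
    · rw [hℓ.mul_eq_zero_of_add_eq_zero hab, zero_mul]
    have hs := ih (Units.mk0 _ hab) c (by
      simpa only [List.map_cons, List.sum_cons, Units.val_mk0, add_assoc] using h)
    rw [List.map_cons, List.prod_cons] at hs
    rw [hℓ.mul_eq_mul_of_add_eq (Units.val_mk0 hab).symm, mul_assoc, hs, mul_zero]

theorem prod_map_eq_zero_of_sum (hℓ : IsSteinbergLog ℓ) (l : List Fˣ) (hl : 2 ≤ l.length)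
    (h : (l.map (↑)).sum = (1 : F) ∨ (l.map (↑)).sum = (0 : F)) :
    (l.map ℓ).prod = 0 := by
  match l, hl with
  | a :: b :: t, _ => exact hℓ.prod_map_eq_zero_of_sum_cons_cons a b t h

end IsSteinbergLog

theorem isSteinbergLog_milnorL (F : Type) [Field F] : IsSteinbergLog (MilnorL F) where
  map_mul a b := by simp only [MilnorL, ofMul_mul, map_add]
  mul_eq_zero_of_add_eq_one h := by
    simpa [MilnorL] using RingQuot.mkRingHom_rel (MilnorRel.steinberg _ _ h)

/-- Relation `R₅` of Proposition 1.0: if `a₁ + ⋯ + aₙ = 1` or `a₁ + ⋯ + aₙ = 0`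
with `n ≥ 2`, then `ℓ(a₁)·ℓ(a₂)⋯ℓ(aₙ) = 0` in `K^M_n(F)`. -/
theorem stmt_4 (F : Type) [Field F] (n : ℕ) (hn : 2 ≤ n) (a : Fin n → Fˣ)
    (h : (∑ i, (a i : F)) = 1 ∨ (∑ i, (a i : F)) = 0) :
    (List.ofFn fun i => MilnorL F (a i)).prod = 0 := by
  have := (isSteinbergLog_milnorL F).prod_map_eq_zero_of_sum (List.ofFn a)
    (by rwa [List.length_ofFn]) (by rwa [List.map_ofFn, List.sum_ofFn])
  rwa [List.map_ofFn] at this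
end
end

section
/- Let F be a field equipped with a surjective discrete valuation ν : F^× → ℤ with residue field k(ν). Write ∂_π(x) = ∂_π⁰(x) + ∂_ν(x)·Π with ∂_π⁰(x), ∂_ν(x) ∈ K^M_*(k(ν)) (this is well defined since (K^M_*(k(ν)))(Π) is a free left module on {1, Π}). Then the map ∂_ν : K^M_m(F) → K^M_{m−1}(k(ν)) is independent of the choice of uniformizer π: if π and π′ are two elements with ν(π) = ν(π′) = 1, then the Π-components of ∂_π(x) and ∂_{π′}(x) agree for all x ∈ K^M_*(F). -/
noncomputable section

/-- Auxiliary map for the grading-sign automorphism: the algebra map on the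
tensor algebra sending `ℓ(a)` to `−ℓ(a)`. -/
def MilnorSigmaAux (k : Type) [Field k] :
    TensorAlgebra ℤ (Additive kˣ) →ₐ[ℤ] MilnorK k :=
  TensorAlgebra.lift ℤ
    ((RingQuot.mkAlgHom ℤ (MilnorRel k)).toLinearMap ∘ₗ
      (TensorAlgebra.ι ℤ) ∘ₗ (-LinearMap.id))

lemma MilnorSigmaAux_ι (k : Type) [Field k] (x : Additive kˣ) :
    MilnorSigmaAux k (TensorAlgebra.ι ℤ x) =
      -(RingQuot.mkAlgHom ℤ (MilnorRel k) (TensorAlgebra.ι ℤ x)) := by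
  simp [MilnorSigmaAux]

/-- The grading-sign ring automorphism `σ` of `K^M_*(k)`, acting by `(−1)^n` on
the degree-`n` piece; it is induced by `ℓ(a) ↦ −ℓ(a)`. -/
def MilnorSigma (k : Type) [Field k] : MilnorK k →ₐ[ℤ] MilnorK k :=
  RingQuot.liftAlgHom ℤ ⟨MilnorSigmaAux k, by
    rintro x y ⟨a, b, h⟩
    rw [map_zero, map_mul, MilnorSigmaAux_ι, MilnorSigmaAux_ι]
    have : ∀ A B : MilnorK k, -A * -B = A * B := fun A B => neg_mul_neg A B
    rw [this, ← map_mul,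
      RingQuot.mkAlgHom_rel ℤ (MilnorRel.steinberg a b h), map_zero]⟩

/-- The element `ε = ℓ(−1)`. -/
def MilnorEps (k : Type) [Field k] : MilnorK k := MilnorL k (-1)

/-- The multiplication on `(K^M_*(k))(Π) = K^M_*(k) ⊕ K^M_*(k)·Π`, the free left
module on basis `{1, Π}`, determined by `Π² = ℓ(−1)·Π` and `Π·a = σ(a)·Π`
(i.e. `Π·a = (−1)^n·a·Π` for `a` homogeneous of degree `n`):
`(a + bΠ)(c + dΠ) = ac + (ad + b·σ(c) + b·σ(d)·ε)Π`. -/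
def APiMul (k : Type) [Field k] (x y : MilnorK k × MilnorK k) :
    MilnorK k × MilnorK k :=
  (x.1 * y.1,
    x.1 * y.2 + x.2 * MilnorSigma k y.1 + x.2 * MilnorSigma k y.2 * MilnorEps k)

/-- The degree-`n` piece of the `Π`-component of `(K^M_*(k))(Π)`; in degree `n`
one has `(K^M(k))(Π)_n = K^M_n(k) ⊕ K^M_{n−1}(k)·Π`. -/
def MilnorDegShift (k : Type) [Field k] : ℕ → AddSubgroup (MilnorK k)
  | 0 => ⊥
  | n + 1 => MilnorDeg k n

section DVR

variable (O : Type) [CommRing O] [IsDomain O] [IsDiscreteValuationRing O]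
variable (F : Type) [Field F] [Algebra O F] [IsFractionRing O F]

/-- The residue field `k(ν)` of the valuation. -/
abbrev ResField := IsLocalRing.ResidueField O

/-- The residue class `ū ∈ k(ν)^×` of a unit `u ∈ O^×`. -/
def resUnit (u : Oˣ) : (ResField O)ˣ :=
  Units.map (IsLocalRing.residue O).toMonoidHom u

/-- The element `u·π^i ∈ F^×`, for `u ∈ O^×` a unit, `π` a uniformizer and `i ∈ ℤ`. -/
def unitPiPow (u : Oˣ) (π : O) (hπ : Irreducible π) (i : ℤ) : Fˣ :=
  Units.map (algebraMap O F).toMonoidHom u *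
    (Units.mk0 (algebraMap O F π)
      (by
        simpa [map_eq_zero_iff (algebraMap O F) (IsFractionRing.injective O F)]
          using hπ.ne_zero)) ^ i

/-- `∂` is the boundary map `∂_π : K^M_*(F) → (K^M_*(k(ν)))(Π)` attached to the
uniformizer `π`: a graded ring homomorphism (with `(K^M(k))(Π)` carrying the
multiplication `APiMul`, and `(K^M(k))(Π)ₙ = K^Mₙ ⊕ K^M_{n-1}·Π`) satisfying
`∂_π(ℓ(u·π^i)) = ℓ(ū) + i·Π`. -/
structure IsDpi (π : O) (hπ : Irreducible π)
    (d : MilnorK F → MilnorK (ResField O) × MilnorK (ResField O)) : Prop where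
  map_one : d 1 = (1, 0)
  map_add : ∀ x y, d (x + y) = d x + d y
  map_mul : ∀ x y, d (x * y) = APiMul (ResField O) (d x) (d y)
  graded : ∀ (n : ℕ) (x : MilnorK F), x ∈ MilnorDeg F n →
    (d x).1 ∈ MilnorDeg (ResField O) n ∧ (d x).2 ∈ MilnorDegShift (ResField O) n
  map_l : ∀ (u : Oˣ) (i : ℤ),
    d (MilnorL F (unitPiPow O F u π hπ i)) =
      (MilnorL (ResField O) (resUnit O u), (i : MilnorK (ResField O)))

end DVR

/-!
Write `π = π' * w` with `w ∈ Oˣ`. Since `u πⁱ = (u wⁱ) π'ⁱ`, on generators `∂_{π'}` is `∂_π`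
followed by the substitution `Π ↦ Π + ℓ(w̄)`. The element `c = ℓ(w̄)` satisfies `c y = σ(y) c`,
`σ(c) = -c` and `c² = ℓ(-1) c`, i.e. the defining relations of `Π`, so the substitution is
multiplicative and `∂_{π'} = (Π ↦ Π + c) ∘ ∂_π` on all of `K^M_*(F)`. The substitution
`a + bΠ ↦ (a + bc) + bΠ` fixes the `Π`-coefficient.
-/

namespace MilnorK

variable {k : Type} [Field k]

theorem induction_on {P : MilnorK k → Prop} (x : MilnorK k)
    (h_intCast : ∀ r : ℤ, P r) (h_milnorL : ∀ a, P (MilnorL k a))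
    (h_add : ∀ x y, P x → P y → P (x + y)) (h_mul : ∀ x y, P x → P y → P (x * y)) :
    P x := by
  obtain ⟨t, rfl⟩ := RingQuot.mkRingHom_surjective (MilnorRel k) x
  induction t using TensorAlgebra.induction with
  | algebraMap r => simpa only [algebraMap_int_eq, eq_intCast, map_intCast] using h_intCast r
  | ι a => exact h_milnorL a.toMul
  | mul p q hp hq => simpa only [map_mul] using h_mul _ _ hp hq
  | add p q hp hq => simpa only [map_add] using h_add _ _ hp hq

end MilnorK

section MilnorLemmas

variable {k : Type} [Field k]

theorem milnorL_mul (a b : kˣ) : MilnorL k (a * b) = MilnorL k a + MilnorL k b := by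
  simp only [MilnorL, ofMul_mul, map_add]

theorem milnorL_inv (a : kˣ) : MilnorL k a⁻¹ = -MilnorL k a := by
  simp only [MilnorL, ofMul_inv, map_neg]

theorem milnorL_zpow (a : kˣ) (i : ℤ) : MilnorL k (a ^ i) = i * MilnorL k a := by
  rw [MilnorL, ofMul_zpow, map_zsmul, map_zsmul, zsmul_eq_mul, MilnorL]

theorem milnorL_mul_milnorL_of_add_eq_one {a b : kˣ} (h : (a : k) + b = 1) :
    MilnorL k a * MilnorL k b = 0 := by
  simp only [MilnorL, ← map_mul, RingQuot.mkRingHom_rel (MilnorRel.steinberg a b h), map_zero]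

theorem milnorL_mul_milnorL_neg (a : kˣ) : MilnorL k a * MilnorL k (-a) = 0 := by
  by_cases ha : (a : k) = 1
  · rw [Units.val_eq_one.mp ha, MilnorL, ofMul_one, map_zero, map_zero, zero_mul]
  have h₁ : 1 - (a : k) ≠ 0 := sub_ne_zero.mpr (Ne.symm ha)
  have h₂ : 1 - (a⁻¹ : kˣ) ≠ (0 : k) := by
    rw [Units.val_inv_eq_inv_val]
    exact sub_ne_zero.mpr (Ne.symm (inv_ne_one.mpr ha))
  -- `-a = (1 - a) / (1 - a⁻¹)`
  have hneg : -a = Units.mk0 _ h₁ * (Units.mk0 _ h₂)⁻¹ := by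
    ext
    simp only [Units.val_neg, Units.val_mul, Units.val_inv_eq_inv_val, Units.val_mk0]
    field_simp
    ring
  have hs₁ := milnorL_mul_milnorL_of_add_eq_one (k := k) (a := a) (b := Units.mk0 _ h₁)
    (by simp)
  have hs₂ := milnorL_mul_milnorL_of_add_eq_one (k := k) (a := a⁻¹) (b := Units.mk0 _ h₂)
    (by simp)
  rw [milnorL_inv, neg_mul (MilnorL k a), neg_eq_zero] at hs₂
  rw [hneg, milnorL_mul, milnorL_inv, mul_add, mul_neg (MilnorL k a), hs₁, hs₂, neg_zero,
    add_zero]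

theorem milnorL_neg (a : kˣ) : MilnorL k (-a) = MilnorEps k + MilnorL k a := by
  rw [MilnorEps, ← milnorL_mul, neg_one_mul]

theorem milnorL_mul_milnorL_add_milnorL_mul_milnorL (a b : kˣ) :
    MilnorL k a * MilnorL k b + MilnorL k b * MilnorL k a = 0 := by
  have hab := milnorL_mul_milnorL_neg (a * b)
  have ha := milnorL_mul_milnorL_neg a
  have hb := milnorL_mul_milnorL_neg b
  simp only [milnorL_neg, milnorL_mul, mul_add, add_mul] at hab ha hb
  linear_combination (norm := abel) hab - ha - hb

theorem milnorL_mul_self (a : kˣ) : MilnorL k a * MilnorL k a = MilnorEps k * MilnorL k a := by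
  have h := milnorL_mul_milnorL_neg a
  rw [milnorL_neg, mul_add] at h
  unfold MilnorEps at h ⊢
  linear_combination (norm := abel) h - milnorL_mul_milnorL_add_milnorL_mul_milnorL a (-1)

theorem milnorSigma_milnorL (a : kˣ) : MilnorSigma k (MilnorL k a) = -MilnorL k a := by
  rw [MilnorL, ← RingQuot.mkAlgHom_coe ℤ, AlgHom.coe_toRingHom, MilnorSigma,
    RingQuot.liftAlgHom_mkAlgHom_apply, MilnorSigmaAux_ι]

theorem milnorL_mul_eq_milnorSigma_mul (a : kˣ) (y : MilnorK k) :
    MilnorL k a * y = MilnorSigma k y * MilnorL k a := by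
  induction y using MilnorK.induction_on with
  | h_intCast r => rw [map_intCast, Int.cast_comm]
  | h_milnorL b =>
    rw [milnorSigma_milnorL, neg_mul (MilnorL k b), eq_neg_iff_add_eq_zero]
    exact milnorL_mul_milnorL_add_milnorL_mul_milnorL a b
  | h_add x y hx hy => rw [mul_add, hx, hy, map_add, add_mul]
  | h_mul x y hx hy => rw [← mul_assoc, hx, mul_assoc, hy, ← mul_assoc, map_mul]

def piShear (c : MilnorK k) (x : MilnorK k × MilnorK k) : MilnorK k × MilnorK k :=
  (x.1 + x.2 * c, x.2)

theorem piShear_add (c : MilnorK k) (x y : MilnorK k × MilnorK k) :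
    piShear c (x + y) = piShear c x + piShear c y := by
  simp only [piShear, Prod.fst_add, Prod.snd_add, add_mul, Prod.mk_add_mk]
  abel_nf

theorem apiMul_piShear {c : MilnorK k} (hc : ∀ y, c * y = MilnorSigma k y * c)
    (hσc : MilnorSigma k c = -c) (hcc : c * c = MilnorEps k * c) (x y : MilnorK k × MilnorK k) :
    APiMul k (piShear c x) (piShear c y) = piShear c (APiMul k x y) := by
  obtain ⟨x₁, x₂⟩ := x
  obtain ⟨y₁, y₂⟩ := y
  simp only [APiMul, piShear, Prod.mk.injEq]
  constructor
  · rw [show (x₁ + x₂ * c) * (y₁ + y₂ * c) = x₁ * y₁ + x₁ * y₂ * c + x₂ * (c * y₁)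
        + x₂ * (c * y₂ * c) by noncomm_ring, hc y₁, hc y₂, mul_assoc (MilnorSigma k y₂), hcc]
    noncomm_ring
  · rw [map_add, map_mul, hσc, show (x₁ + x₂ * c) * y₂ = x₁ * y₂ + x₂ * (c * y₂) by noncomm_ring,
      hc, mul_neg (MilnorSigma k y₂), mul_add, mul_neg x₂]
    abel

end MilnorLemmas

theorem map_val_units_zpow {R S G : Type*} [Monoid R] [GroupWithZero S] [FunLike G R S]
    [MonoidHomClass G R S] (f : G) (w : Rˣ) (i : ℤ) : f ↑(w ^ i) = f w ^ i := by
  have := congrArg Units.val (map_zpow (Units.map (f : R →* S)) w i)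
  rwa [Units.val_zpow_eq_zpow_val] at this

section DVR

variable {O : Type} [CommRing O] [IsDomain O] [IsDiscreteValuationRing O]
variable {F : Type} [Field F] [Algebra O F] [IsFractionRing O F]

omit [IsDomain O] [IsDiscreteValuationRing O] in
theorem val_unitPiPow (u : Oˣ) {π : O} (hπ : Irreducible π) (i : ℤ) :
    (unitPiPow O F u π hπ i : F) = algebraMap O F u * algebraMap O F π ^ i := by
  simp [unitPiPow]

theorem exists_eq_unitPiPow {π : O} (hπ : Irreducible π) (a : Fˣ) :
    ∃ (u : Oˣ) (i : ℤ), a = unitPiPow O F u π hπ i := by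
  obtain ⟨i, u, ha⟩ :=
    IsDiscreteValuationRing.exists_units_eq_smul_zpow_of_irreducible hπ a.ne_zero
  exact ⟨u, i, Units.ext (by rw [ha, val_unitPiPow, Units.smul_def, Algebra.smul_def])⟩

omit [IsDomain O] [IsDiscreteValuationRing O] in
theorem unitPiPow_eq_of_mul_eq {π π' : O} (hπ : Irreducible π) (hπ' : Irreducible π')
    {w : Oˣ} (hw : π' * w = π) (u : Oˣ) (i : ℤ) :
    unitPiPow O F u π hπ i = unitPiPow O F (u * w ^ i) π' hπ' i := by
  ext
  rw [val_unitPiPow, val_unitPiPow, ← hw, Units.val_mul, map_mul, map_mul, map_val_units_zpow,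
    mul_zpow]
  ring

theorem resUnit_mul_zpow (u w : Oˣ) (i : ℤ) :
    resUnit O (u * w ^ i) = resUnit O u * resUnit O w ^ i := by
  simp only [resUnit, map_mul, map_zpow]

namespace IsDpi

variable {π π' : O} {hπ : Irreducible π} {hπ' : Irreducible π'}
variable {d d' : MilnorK F → MilnorK (ResField O) × MilnorK (ResField O)}

theorem map_intCast (hd : IsDpi O F π hπ d) (r : ℤ) :
    d r = ((r : MilnorK (ResField O)), 0) := by
  have := map_zsmul (AddMonoidHom.mk' d hd.map_add) r 1
  simpa only [AddMonoidHom.mk'_apply, zsmul_eq_mul, mul_one, hd.map_one, Prod.smul_mk,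
    smul_zero] using this

theorem eq_piShear (hd : IsDpi O F π hπ d) (hd' : IsDpi O F π' hπ' d') {w : Oˣ}
    (hw : π' * w = π) (x : MilnorK F) :
    d' x = piShear (MilnorL (ResField O) (resUnit O w)) (d x) := by
  induction x using MilnorK.induction_on with
  | h_intCast r => rw [hd.map_intCast, hd'.map_intCast, piShear, zero_mul, add_zero]
  | h_milnorL a =>
    obtain ⟨u, i, rfl⟩ := exists_eq_unitPiPow hπ a
    rw [hd.map_l, unitPiPow_eq_of_mul_eq hπ hπ' hw, hd'.map_l, piShear, resUnit_mul_zpow,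
      milnorL_mul, milnorL_zpow]
  | h_add x y hx hy => rw [hd.map_add, hd'.map_add, hx, hy, piShear_add]
  | h_mul x y hx hy =>
    rw [hd.map_mul, hd'.map_mul, hx, hy, apiMul_piShear (milnorL_mul_eq_milnorSigma_mul _)
      (milnorSigma_milnorL _) (milnorL_mul_self _)]

end IsDpi

end DVR

/-- Independence of the boundary `∂_ν` from the choice of uniformizer: if `π`,
`π′` are two uniformizers and `∂_π`, `∂_{π′}` the associated boundary maps, then
the `Π`-components of `∂_π(x)` and `∂_{π′}(x)` agree for every `x ∈ K^M_*(F)`. -/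
theorem stmt_11 (O : Type) [CommRing O] [IsDomain O] [IsDiscreteValuationRing O]
    (F : Type) [Field F] [Algebra O F] [IsFractionRing O F]
    (π π' : O) (hπ : Irreducible π) (hπ' : Irreducible π')
    (d d' : MilnorK F → MilnorK (ResField O) × MilnorK (ResField O))
    (hd : IsDpi O F π hπ d) (hd' : IsDpi O F π' hπ' d') :
    ∀ x : MilnorK F, (d x).2 = (d' x).2 := by
  obtain ⟨w, hw⟩ := IsDiscreteValuationRing.associated_of_irreducible O hπ' hπ
  intro x
  rw [hd.eq_piShear hd' hw]
  rfl
end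
end
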